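/- arXiv:1005.2511 — 10 statements merged into one kernel-verified Lean document; each statement's English description precedes it below -/
import Mathlib

section
/- Fix real constants k > 0, μ₊ > 0, μ₋ > 0 and an integer m ≥ 1. Define u(x,y) = (μ₋/k)·sinh(m(1+y))·cos(mx)/(m·cosh(m)) and v(x,y) = (μ₋/k)·(tanh(m)/m)·sinh(m(1−y))·cos(mx)/sinh(m). Then: (i) u is harmonic on ℝ² (∂²u/∂x² + ∂²u/∂y² = 0), u(x,−1) = 0 and (k/μ₋)·∂u/∂y(x,0) = cos(mx) for all x; (ii) v is harmonic on ℝ², v(x,1) = 0 and v(x,0) = u(x,0) for all x; (iii) cos(mx) − (k/μ₊)·∂v/∂y(x,0) = ((μ₊+μ₋)/μ₊)·cos(mx) for all x ∈ ℝ. -/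
private lemma dAcos (A c x : ℝ) :
    deriv (fun t : ℝ => A * Real.cos (c * t)) x = -(A * c * Real.sin (c * x)) := by
  have h1 : HasDerivAt (fun t : ℝ => c * t) c x := by simpa using (hasDerivAt_id x).const_mul c
  have h2 := ((Real.hasDerivAt_cos (c * x)).comp x h1).const_mul A
  exact h2.deriv.trans (by ring)

private lemma dAsin (A c x : ℝ) :
    deriv (fun t : ℝ => A * Real.sin (c * t)) x = A * c * Real.cos (c * x) := by
  have h1 : HasDerivAt (fun t : ℝ => c * t) c x := by simpa using (hasDerivAt_id x).const_mul c
  have h2 := ((Real.hasDerivAt_sin (c * x)).comp x h1).const_mul A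
  exact h2.deriv.trans (by ring)

private lemma dAsinh (A a b x : ℝ) :
    deriv (fun t : ℝ => A * Real.sinh (a + b * t)) x = A * b * Real.cosh (a + b * x) := by
  have h1 : HasDerivAt (fun t : ℝ => a + b * t) b x := by
    simpa using ((hasDerivAt_id x).const_mul b).const_add a
  have h2 := ((Real.hasDerivAt_sinh (a + b * x)).comp x h1).const_mul A
  exact h2.deriv.trans (by ring)

private lemma dAcosh (A a b x : ℝ) :
    deriv (fun t : ℝ => A * Real.cosh (a + b * t)) x = A * b * Real.sinh (a + b * x) := by
  have h1 : HasDerivAt (fun t : ℝ => a + b * t) b x := by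
    simpa using ((hasDerivAt_id x).const_mul b).const_add a
  have h2 := ((Real.hasDerivAt_cosh (a + b * x)).comp x h1).const_mul A
  exact h2.deriv.trans (by ring)

/-- Mode-by-mode computation behind Lemma 3.3: the operator
`G(0,0) = id − B(0,0)S₂(0,0)tr₀T₁(0)` acts on the Fourier mode `cos(mx)` as
multiplication by `(μ₊+μ₋)/μ₊`. -/
theorem stmt_3 (k μp μm : ℝ) (hk : 0 < k) (hμp : 0 < μp) (hμm : 0 < μm)
    (m : ℤ) (hm : 1 ≤ m) (u v : ℝ → ℝ → ℝ)
    (hu : ∀ x y : ℝ,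
      u x y = (μm / k) * (Real.sinh ((m : ℝ) * (1 + y)) * Real.cos ((m : ℝ) * x) /
        ((m : ℝ) * Real.cosh (m : ℝ))))
    (hv : ∀ x y : ℝ,
      v x y = (μm / k) * (Real.tanh (m : ℝ) / (m : ℝ)) *
        (Real.sinh ((m : ℝ) * (1 - y)) * Real.cos ((m : ℝ) * x) / Real.sinh (m : ℝ))) :
    -- (i)
    ((∀ x y : ℝ,
      deriv (fun x' => deriv (fun x'' => u x'' y) x') x +
        deriv (fun y' => deriv (fun y'' => u x y'') y') y = 0) ∧
     (∀ x : ℝ, u x (-1) = 0) ∧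
     (∀ x : ℝ, (k / μm) * deriv (fun y => u x y) 0 = Real.cos ((m : ℝ) * x))) ∧
    -- (ii)
    ((∀ x y : ℝ,
      deriv (fun x' => deriv (fun x'' => v x'' y) x') x +
        deriv (fun y' => deriv (fun y'' => v x y'') y') y = 0) ∧
     (∀ x : ℝ, v x 1 = 0) ∧
     (∀ x : ℝ, v x 0 = u x 0)) ∧
    -- (iii)
    (∀ x : ℝ, Real.cos ((m : ℝ) * x) - (k / μp) * deriv (fun y => v x y) 0 =
      ((μp + μm) / μp) * Real.cos ((m : ℝ) * x)) := by
  set c : ℝ := (m : ℝ) with hc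
  have hc1 : (1 : ℝ) ≤ c := by rw [hc]; exact_mod_cast hm
  have hc0 : c ≠ 0 := by linarith
  have hcosh : Real.cosh c ≠ 0 := (Real.cosh_pos (x := c)).ne'
  have hsinh : Real.sinh c ≠ 0 := (Real.sinh_pos_iff.mpr (by linarith)).ne'
  have hk0 : k ≠ 0 := hk.ne'
  have hμp0 : μp ≠ 0 := hμp.ne'
  have hμm0 : μm ≠ 0 := hμm.ne'
  refine ⟨⟨?_, ?_, ?_⟩, ⟨?_, ?_, ?_⟩, ?_⟩
  · intro x y
    set A : ℝ := μm / k * Real.sinh (c + c * y) / (c * Real.cosh c) with hA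
    set B : ℝ := μm / k * Real.cos (c * x) / (c * Real.cosh c) with hB
    have hx1 : (fun x' => deriv (fun x'' => u x'' y) x') =
        fun x' => (-(A * c)) * Real.sin (c * x') := by
      funext x'
      have : (fun x'' => u x'' y) = fun x'' => A * Real.cos (c * x'') := by
        funext t
        rw [hu, show c * (1 + y) = c + c * y from by ring, hA]; ring
      rw [this, dAcos]; ring
    have hy1 : (fun y' => deriv (fun y'' => u x y'') y') =
        fun y' => (B * c) * Real.cosh (c + c * y') := by
      funext y'
      have : (fun y'' => u x y'') = fun y'' => B * Real.sinh (c + c * y'') := by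
        funext t
        rw [hu, show c * (1 + t) = c + c * t from by ring, hB]; ring
      rw [this, dAsinh]
    rw [hx1, hy1, dAsin, dAcosh, hA, hB]
    field_simp
    ring
  · intro x
    rw [hu]; norm_num
  · intro x
    set B : ℝ := μm / k * Real.cos (c * x) / (c * Real.cosh c) with hB
    have : (fun y => u x y) = fun y => B * Real.sinh (c + c * y) := by
      funext t
      rw [hu, show c * (1 + t) = c + c * t from by ring, hB]; ring
    rw [this, dAsinh, show c + c * 0 = c from by ring, hB]
    field_simp
  · intro x y
    set A : ℝ := μm / k * (Real.tanh c / c) * Real.sinh (c + -c * y) / Real.sinh c with hA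
    set B : ℝ := μm / k * (Real.tanh c / c) * Real.cos (c * x) / Real.sinh c with hB
    have hx1 : (fun x' => deriv (fun x'' => v x'' y) x') =
        fun x' => (-(A * c)) * Real.sin (c * x') := by
      funext x'
      have : (fun x'' => v x'' y) = fun x'' => A * Real.cos (c * x'') := by
        funext t
        rw [hv, show c * (1 - y) = c + -c * y from by ring, hA]; ring
      rw [this, dAcos]; ring
    have hy1 : (fun y' => deriv (fun y'' => v x y'') y') =
        fun y' => (B * -c) * Real.cosh (c + -c * y') := by
      funext y'
      have : (fun y'' => v x y'') = fun y'' => B * Real.sinh (c + -c * y'') := by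
        funext t
        rw [hv, show c * (1 - t) = c + -c * t from by ring, hB]; ring
      rw [this, dAsinh]
    rw [hx1, hy1, dAsin, dAcosh, hA, hB]
    field_simp
    ring
  · intro x
    rw [hv]; norm_num
  · intro x
    rw [hv, hu, Real.tanh_eq_sinh_div_cosh]
    norm_num
    field_simp
  · intro x
    set B : ℝ := μm / k * (Real.tanh c / c) * Real.cos (c * x) / Real.sinh c with hB
    have : (fun y => v x y) = fun y => B * Real.sinh (c + -c * y) := by
      funext t
      rw [hv, show c * (1 - t) = c + -c * t from by ring, hB]; ring
    rw [this, dAsinh, show c + -c * 0 = c from by ring, hB, Real.tanh_eq_sinh_div_cosh]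
    field_simp
    ring
end

section
/- Fix real constants k > 0, g > 0, μ₊ > 0, μ₋ > 0, ρ₊ > 0, ρ₋ > 0 and γ_w ≥ 0, γ_d ≥ 0, and assume g(ρ₋−ρ₊) + γ_w > 0. With λ1f, λ2f, λ1h, λ2h as below, define Λ₋(m) = (λ1f(m)+λ2h(m) − √((λ1f(m)−λ2h(m))² + 4·λ1h(m)·λ2f(m)))/2 for integers m ≥ 1 (real square root). Then for every integer m ≥ 1 one has Λ₋(m) ≤ λ1f(1)/2 < 0. -/
private lemma stmt_8_aux (C Cm k μ T t mR : ℝ) (hC : 0 < C) (hCm : C ≤ Cm)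
    (hk : 0 < k) (hμ : 0 < μ) (hT : 0 < T) (hT1 : T ≤ 1) (ht : 0 < t)
    (ht2 : 1 ≤ 2 * t) (hm : 1 ≤ mR) :
    C * k / (μ * t) / 2 ≤ Cm * (k * mR) / (μ * T) := by
  rw [div_div, div_le_div_iff₀ (by positivity) (by positivity)]
  have hCm' : 0 < Cm := lt_of_lt_of_le hC hCm
  have a1 : C * k * (μ * T) ≤ C * k * (μ * 1) :=
    mul_le_mul_of_nonneg_left (mul_le_mul_of_nonneg_left hT1 hμ.le)
      (mul_nonneg hC.le hk.le)
  have a2 : C * (k * μ) ≤ Cm * (k * μ) :=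
    mul_le_mul_of_nonneg_right hCm (mul_nonneg hk.le hμ.le)
  have a3 : Cm * (k * μ) * 1 ≤ Cm * (k * μ) * mR :=
    mul_le_mul_of_nonneg_left hm (mul_nonneg hCm'.le (mul_nonneg hk.le hμ.le))
  have a4 : Cm * (k * μ) * mR * 1 ≤ Cm * (k * μ) * mR * (2 * t) :=
    mul_le_mul_of_nonneg_left ht2
      (mul_nonneg (mul_nonneg hCm'.le (mul_nonneg hk.le hμ.le)) (by linarith))
  nlinarith [a1, a2, a3, a4]

set_option maxHeartbeats 1000000 in
/-- In the stable regime `g(ρ₋−ρ₊) + γ_w > 0`, the eigenvalues `Λ₋(m)` of the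
linearized two-phase Muskat operator satisfy `Λ₋(m) ≤ λ1f(1)/2 < 0` for all `m ≥ 1`. -/
theorem stmt_8
    (k g μp μm ρp ρm γw γd : ℝ)
    (hk : 0 < k) (hg : 0 < g) (hμp : 0 < μp) (hμm : 0 < μm)
    (hρp : 0 < ρp) (hρm : 0 < ρm) (hγw : 0 ≤ γw) (hγd : 0 ≤ γd)
    (l1f l2f l1h l2h : ℕ → ℝ)
    (h1f : ∀ m : ℕ, 1 ≤ m → l1f m =
      -((g * (ρm - ρp) + γw * (m : ℝ) ^ 2) * (k * m) / ((μp + μm) * Real.tanh m)))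
    (h2f : ∀ m : ℕ, 1 ≤ m → l2f m =
      -((g * (ρm - ρp) + γw * (m : ℝ) ^ 2) * (k * m) / ((μp + μm) * Real.sinh m)))
    (h1h : ∀ m : ℕ, 1 ≤ m → l1h m =
      -((g * ρp + γd * (m : ℝ) ^ 2) * (k * m) / ((μp + μm) * Real.sinh m)))
    (h2h : ∀ m : ℕ, 1 ≤ m → l2h m =
      -((g * ρp + γd * (m : ℝ) ^ 2) * (k * m / (μp + μm)) *
        ((μm * (Real.cosh m ^ 2 - 1) + μp * Real.cosh m ^ 2) /
          (μp * Real.sinh m * Real.cosh m))))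
    (hstab : 0 < g * (ρm - ρp) + γw) :
    (∀ m : ℕ, 1 ≤ m →
      (l1f m + l2h m -
        Real.sqrt ((l1f m - l2h m) ^ 2 + 4 * l1h m * l2f m)) / 2 ≤ l1f 1 / 2) ∧
    l1f 1 / 2 < 0 := by
  have hμ : 0 < μp + μm := by linarith
  -- facts about tanh 1
  have hs1 : 0 < Real.sinh 1 := Real.sinh_pos_iff.mpr one_pos
  have hc1 : 0 < Real.cosh (1 : ℝ) := Real.cosh_pos _
  have ht1 : 0 < Real.tanh (1 : ℝ) := by
    rw [Real.tanh_eq_sinh_div_cosh]; positivity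
  have hcs1 : Real.cosh (1 : ℝ) < 2 * Real.sinh 1 := by
    rw [Real.cosh_eq, Real.sinh_eq, Real.exp_neg]
    have he : (2.7182818283 : ℝ) < Real.exp 1 := Real.exp_one_gt_d9
    have hep : 0 < Real.exp 1 := Real.exp_pos 1
    nlinarith [mul_pos hep hep, inv_pos.mpr hep, mul_inv_cancel₀ (ne_of_gt hep)]
  have ht1half : 1 < 2 * Real.tanh 1 := by
    rw [Real.tanh_eq_sinh_div_cosh, mul_div_assoc' 2, lt_div_iff₀ hc1]
    linarith
  have hl1f1 : l1f 1 = -((g * (ρm - ρp) + γw) * k / ((μp + μm) * Real.tanh 1)) := by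
    rw [h1f 1 le_rfl]; push_cast; ring_nf
  have hl1f1neg : l1f 1 / 2 < 0 := by
    rw [hl1f1]
    have : 0 < (g * (ρm - ρp) + γw) * k / ((μp + μm) * Real.tanh 1) := by positivity
    linarith
  refine ⟨?_, hl1f1neg⟩
  intro m hm
  have hm1 : (1 : ℝ) ≤ (m : ℝ) := by exact_mod_cast hm
  have hmpos : (0 : ℝ) < (m : ℝ) := by linarith
  have hs : 0 < Real.sinh (m : ℝ) := Real.sinh_pos_iff.mpr hmpos
  have hc : 0 < Real.cosh (m : ℝ) := Real.cosh_pos _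
  have hsc : Real.sinh (m : ℝ) < Real.cosh (m : ℝ) := by
    nlinarith [Real.cosh_sub_sinh (m : ℝ), Real.exp_pos (-(m : ℝ))]
  have hT : 0 < Real.tanh (m : ℝ) := by
    rw [Real.tanh_eq_sinh_div_cosh]; positivity
  have hT1 : Real.tanh (m : ℝ) < 1 := by
    rw [Real.tanh_eq_sinh_div_cosh, div_lt_one hc]; exact hsc
  have hCm : 0 < g * (ρm - ρp) + γw * (m : ℝ) ^ 2 := by nlinarith [mul_nonneg hγw (by nlinarith : (0:ℝ) ≤ (m:ℝ)^2 - 1)]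
  have hDm : 0 < g * ρp + γd * (m : ℝ) ^ 2 := by nlinarith [mul_nonneg hγd (sq_nonneg (m:ℝ))]
  -- l1h m * l2f m ≥ 0
  have hB : l1h m ≤ 0 := by
    rw [h1h m hm]
    have : 0 ≤ (g * ρp + γd * (m : ℝ) ^ 2) * (k * m) / ((μp + μm) * Real.sinh m) := by
      positivity
    linarith
  have hC : l2f m ≤ 0 := by
    rw [h2f m hm]
    have : 0 ≤ (g * (ρm - ρp) + γw * (m : ℝ) ^ 2) * (k * m) /
        ((μp + μm) * Real.sinh m) := by positivity
    linarith
  have hBC : 0 ≤ 4 * l1h m * l2f m := by nlinarith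
  -- sqrt lower bound
  have hsq : l2h m - l1f m ≤ Real.sqrt ((l1f m - l2h m) ^ 2 + 4 * l1h m * l2f m) := by
    calc l2h m - l1f m ≤ |l1f m - l2h m| := by
          rw [abs_sub_comm]; exact le_abs_self _
      _ = Real.sqrt ((l1f m - l2h m) ^ 2) := (Real.sqrt_sq_eq_abs _).symm
      _ ≤ _ := Real.sqrt_le_sqrt (by linarith)
  have hstep : (l1f m + l2h m -
      Real.sqrt ((l1f m - l2h m) ^ 2 + 4 * l1h m * l2f m)) / 2 ≤ l1f m := by
    linarith
  -- l1f m ≤ l1f 1 / 2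
  have hmain : l1f m ≤ l1f 1 / 2 := by
    have key := stmt_8_aux (g * (ρm - ρp) + γw) (g * (ρm - ρp) + γw * (m : ℝ) ^ 2)
      k (μp + μm) (Real.tanh m) (Real.tanh 1) (m : ℝ) hstab
      (by nlinarith [mul_nonneg hγw (by nlinarith : (0:ℝ) ≤ (m:ℝ)^2 - 1)])
      hk hμ hT hT1.le ht1 (by linarith) hm1
    rw [h1f m hm, hl1f1]
    linarith
  linarith
end

section
/- Fix real constants k > 0, g > 0, μ₊ > 0, μ₋ > 0, ρ₊ > 0, ρ₋ > 0 and γ_w ≥ 0, γ_d ≥ 0, and assume g(ρ₋−ρ₊) + γ_w > 0. With λ1f, λ2f, λ1h, λ2h as below, define Λ±(m) = (λ1f(m)+λ2h(m) ± √((λ1f(m)−λ2h(m))² + 4·λ1h(m)·λ2f(m)))/2 for integers m ≥ 1 (real square root). Then there exists a real number ω > 0 such that Λ₊(m) ≤ −ω and Λ₋(m) ≤ −ω for every integer m ≥ 1. -/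
/-!
Write `τ = tanh m`, `s = sinh m`, `P = (g(ρ₋−ρ₊) + γ_w m²) k m / (μ₊+μ₋)` and
`Q = (gρ₊ + γ_d m²) k m / (μ₊+μ₋)`. The matrix is then
`[[-P/τ, -Q/s], [-P/s, -Q (μ₋τ/μ₊ + 1/τ)]]`, whose determinant is `PQ (μ₋/μ₊ + 1) ≥ PQ`
because `1/τ² − 1/s² = 1`, and whose trace lies between `−(P+Q)` and `−K (P+Q)` with
`K = μ₋/μ₊ + 2`, since `1/2 ≤ τ ≤ 1` for `m ≥ 1`. Both `P` and `Q` are bounded below by a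
positive constant `M` uniformly in `m ≥ 1`, and then the characteristic polynomial is
nonnegative at `−M/(2K)`, which lies to the right of the vertex: both roots are `≤ −M/(2K)`.
-/

open Real

theorem add_sqrt_discrim_div_two_le_neg {a b c d ω : ℝ} (htr : a + d + 2 * ω ≤ 0)
    (hchar : 0 ≤ ω ^ 2 + ω * (a + d) + (a * d - b * c)) :
    (a + d + √((a - d) ^ 2 + 4 * b * c)) / 2 ≤ -ω ∧
      (a + d - √((a - d) ^ 2 + 4 * b * c)) / 2 ≤ -ω := by
  have hsqrt : √((a - d) ^ 2 + 4 * b * c) ≤ -(a + d) - 2 * ω :=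
    (sqrt_le_left (by linarith)).mpr (by nlinarith)
  have := sqrt_nonneg ((a - d) ^ 2 + 4 * b * c)
  constructor <;> linarith

theorem add_sqrt_discrim_div_two_le_of_trace_det {a b c d P Q M K : ℝ} (hM : 0 < M)
    (hMP : M ≤ P) (hMQ : M ≤ Q) (hK : 1 ≤ K) (htr_le : a + d ≤ -(P + Q))
    (htr_ge : -(K * (P + Q)) ≤ a + d) (hdet : P * Q ≤ a * d - b * c) :
    (a + d + √((a - d) ^ 2 + 4 * b * c)) / 2 ≤ -(M / (2 * K)) ∧
      (a + d - √((a - d) ^ 2 + 4 * b * c)) / 2 ≤ -(M / (2 * K)) := by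
  have hK0 : 0 < K := by linarith
  have hω : 2 * (M / (2 * K)) ≤ M := by
    rw [mul_div_assoc', div_le_iff₀ (by positivity)]; nlinarith
  apply add_sqrt_discrim_div_two_le_neg (by linarith)
  have htr : -(M * (P + Q) / 2) ≤ M / (2 * K) * (a + d) := by
    calc -(M * (P + Q) / 2) = M / (2 * K) * -(K * (P + Q)) := by field_simp
      _ ≤ M / (2 * K) * (a + d) := by gcongr
  nlinarith

theorem Real.half_le_tanh {t : ℝ} (ht : 1 ≤ t) : 1 / 2 ≤ tanh t := by
  have hexp : 3 ≤ exp t * exp t := by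
    rw [← exp_add]; linarith [add_one_le_exp (t + t)]
  have hinv : exp (-t) * exp t = 1 := by rw [← exp_add]; simp
  have hcosh : cosh t ≤ 2 * sinh t := by
    rw [cosh_eq, sinh_eq]; nlinarith [exp_pos t, exp_pos (-t)]
  rw [tanh_eq_sinh_div_cosh, le_div_iff₀ (cosh_pos t)]
  linarith

theorem Real.inv_tanh_sq_sub_inv_sinh_sq {t : ℝ} (ht : t ≠ 0) :
    (tanh t)⁻¹ ^ 2 - (sinh t)⁻¹ ^ 2 = 1 := by
  have hs : sinh t ≠ 0 := sinh_ne_zero.mpr ht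
  rw [tanh_eq_sinh_div_cosh, inv_div, div_pow, cosh_sq]
  field_simp
  ring

theorem muskat_factor_eq_mul_tanh_add_inv {t μp μm : ℝ} (ht : t ≠ 0) (hμp : μp ≠ 0) :
    (μm * (cosh t ^ 2 - 1) + μp * cosh t ^ 2) / (μp * sinh t * cosh t) =
      μm / μp * tanh t + (tanh t)⁻¹ := by
  have hs : sinh t ≠ 0 := sinh_ne_zero.mpr ht
  have hc : cosh t ≠ 0 := (cosh_pos t).ne'
  rw [tanh_eq_sinh_div_cosh]
  field_simp
  linear_combination μm * cosh_sq t

theorem muskat_trace_det_bounds {P Q r τ s : ℝ} (hP : 0 ≤ P) (hQ : 0 ≤ Q) (hr : 0 ≤ r)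
    (hτ_half : 1 / 2 ≤ τ) (hτ_one : τ ≤ 1) (hτs : τ⁻¹ ^ 2 - s⁻¹ ^ 2 = 1) :
    -(P / τ) + -(Q * (r * τ + τ⁻¹)) ≤ -(P + Q) ∧
      -((r + 2) * (P + Q)) ≤ -(P / τ) + -(Q * (r * τ + τ⁻¹)) ∧
      P * Q ≤ -(P / τ) * -(Q * (r * τ + τ⁻¹)) - -(Q / s) * -(P / s) := by
  have hτ0 : 0 < τ := by linarith
  have hinv1 : 1 ≤ τ⁻¹ := one_le_inv₀ hτ0 |>.mpr hτ_one
  have hinv2 : τ⁻¹ ≤ 2 := by rw [inv_le_comm₀ hτ0 two_pos]; linarith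
  have hrτ : 0 ≤ r * τ := by positivity
  have hrτ' : r * τ ≤ r := mul_le_of_le_one_right hr hτ_one
  have hdet : -(P / τ) * -(Q * (r * τ + τ⁻¹)) - -(Q / s) * -(P / s) = P * Q * (r + 1) := by
    rw [← hτs]; field_simp; ring
  rw [hdet, div_eq_mul_inv]
  refine ⟨?_, ?_, ?_⟩
  · nlinarith
  · nlinarith
  · nlinarith [mul_nonneg hP hQ]

theorem add_mul_le_add_mul_sq_mul_mul {x γ κ t : ℝ} (hγ : 0 ≤ γ) (hx : 0 ≤ x + γ) (hκ : 0 ≤ κ)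
    (ht : 1 ≤ t) : (x + γ) * κ ≤ (x + γ * t ^ 2) * (κ * t) := by
  have ht2 : γ ≤ γ * t ^ 2 := le_mul_of_one_le_right hγ (by nlinarith)
  calc (x + γ) * κ ≤ (x + γ * t ^ 2) * κ := by gcongr
    _ ≤ (x + γ * t ^ 2) * κ * t := le_mul_of_one_le_right (by nlinarith) ht
    _ = (x + γ * t ^ 2) * (κ * t) := by ring

theorem stmt_9_general
    (k g μp μm ρp ρm γw γd : ℝ)
    (hk : 0 < k) (hg : 0 < g) (hμp : 0 < μp) (hμm : 0 < μm)
    (hρp : 0 < ρp) (hγw : 0 ≤ γw) (hγd : 0 ≤ γd)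
    (l1f l2f l1h l2h : ℕ → ℝ)
    (h1f : ∀ m : ℕ, 1 ≤ m → l1f m =
      -((g * (ρm - ρp) + γw * (m : ℝ) ^ 2) * (k * m) / ((μp + μm) * Real.tanh m)))
    (h2f : ∀ m : ℕ, 1 ≤ m → l2f m =
      -((g * (ρm - ρp) + γw * (m : ℝ) ^ 2) * (k * m) / ((μp + μm) * Real.sinh m)))
    (h1h : ∀ m : ℕ, 1 ≤ m → l1h m =
      -((g * ρp + γd * (m : ℝ) ^ 2) * (k * m) / ((μp + μm) * Real.sinh m)))
    (h2h : ∀ m : ℕ, 1 ≤ m → l2h m =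
      -((g * ρp + γd * (m : ℝ) ^ 2) * (k * m / (μp + μm)) *
        ((μm * (Real.cosh m ^ 2 - 1) + μp * Real.cosh m ^ 2) /
          (μp * Real.sinh m * Real.cosh m))))
    (hstab : 0 < g * (ρm - ρp) + γw) :
    ∃ ω : ℝ, 0 < ω ∧ ∀ m : ℕ, 1 ≤ m →
      (l1f m + l2h m +
        Real.sqrt ((l1f m - l2h m) ^ 2 + 4 * l1h m * l2f m)) / 2 ≤ -ω ∧
      (l1f m + l2h m -
        Real.sqrt ((l1f m - l2h m) ^ 2 + 4 * l1h m * l2f m)) / 2 ≤ -ω := by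
  have hν : 0 < μp + μm := by linarith
  set M := min ((g * (ρm - ρp) + γw) * k / (μp + μm)) ((g * ρp + γd) * k / (μp + μm))
  have hM : 0 < M := lt_min (by positivity) (by positivity)
  refine ⟨M / (2 * (μm / μp + 2)), by positivity, fun m hm => ?_⟩
  have ht : (1 : ℝ) ≤ m := by exact_mod_cast hm
  have ht0 : (m : ℝ) ≠ 0 := by positivity
  set P := (g * (ρm - ρp) + γw * (m : ℝ) ^ 2) * (k * m) / (μp + μm)
  set Q := (g * ρp + γd * (m : ℝ) ^ 2) * (k * m) / (μp + μm)
  have hMP : M ≤ P := (min_le_left _ _).trans <| div_le_div_of_nonneg_right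
    (add_mul_le_add_mul_sq_mul_mul hγw hstab.le hk.le ht) hν.le
  have hMQ : M ≤ Q := (min_le_right _ _).trans <| div_le_div_of_nonneg_right
    (add_mul_le_add_mul_sq_mul_mul hγd (by positivity) hk.le ht) hν.le
  have e1 : l1f m = -(P / tanh m) := by rw [h1f m hm, div_mul_eq_div_div]
  have e2 : l2f m = -(P / sinh m) := by rw [h2f m hm, div_mul_eq_div_div]
  have e3 : l1h m = -(Q / sinh m) := by rw [h1h m hm, div_mul_eq_div_div]
  have e4 : l2h m = -(Q * (μm / μp * tanh m + (tanh m)⁻¹)) := by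
    rw [h2h m hm, muskat_factor_eq_mul_tanh_add_inv ht0 hμp.ne', ← mul_div_assoc]
  obtain ⟨htr_le, htr_ge, hdet⟩ := muskat_trace_det_bounds (r := μm / μp)
    (hM.le.trans hMP) (hM.le.trans hMQ) (by positivity) (half_le_tanh ht) (tanh_lt_one _).le (inv_tanh_sq_sub_inv_sinh_sq ht0)
  rw [e1, e2, e3, e4]
  exact add_sqrt_discrim_div_two_le_of_trace_det hM hMP hMQ
    (by linarith [div_nonneg hμm.le hμp.le]) htr_le htr_ge hdet

/-- In the stable regime `g(ρ₋−ρ₊) + γ_w > 0`, the spectrum of the linearized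
two-phase Muskat operator is uniformly bounded away from the imaginary axis:
there is `ω > 0` with `Λ₊(m) ≤ −ω` and `Λ₋(m) ≤ −ω` for all `m ≥ 1`. -/
theorem stmt_9
    (k g μp μm ρp ρm γw γd : ℝ)
    (hk : 0 < k) (hg : 0 < g) (hμp : 0 < μp) (hμm : 0 < μm)
    (hρp : 0 < ρp) (hρm : 0 < ρm) (hγw : 0 ≤ γw) (hγd : 0 ≤ γd)
    (l1f l2f l1h l2h : ℕ → ℝ)
    (h1f : ∀ m : ℕ, 1 ≤ m → l1f m =
      -((g * (ρm - ρp) + γw * (m : ℝ) ^ 2) * (k * m) / ((μp + μm) * Real.tanh m)))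
    (h2f : ∀ m : ℕ, 1 ≤ m → l2f m =
      -((g * (ρm - ρp) + γw * (m : ℝ) ^ 2) * (k * m) / ((μp + μm) * Real.sinh m)))
    (h1h : ∀ m : ℕ, 1 ≤ m → l1h m =
      -((g * ρp + γd * (m : ℝ) ^ 2) * (k * m) / ((μp + μm) * Real.sinh m)))
    (h2h : ∀ m : ℕ, 1 ≤ m → l2h m =
      -((g * ρp + γd * (m : ℝ) ^ 2) * (k * m / (μp + μm)) *
        ((μm * (Real.cosh m ^ 2 - 1) + μp * Real.cosh m ^ 2) /
          (μp * Real.sinh m * Real.cosh m))))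
    (hstab : 0 < g * (ρm - ρp) + γw) :
    ∃ ω : ℝ, 0 < ω ∧ ∀ m : ℕ, 1 ≤ m →
      (l1f m + l2h m +
        Real.sqrt ((l1f m - l2h m) ^ 2 + 4 * l1h m * l2f m)) / 2 ≤ -ω ∧
      (l1f m + l2h m -
        Real.sqrt ((l1f m - l2h m) ^ 2 + 4 * l1h m * l2f m)) / 2 ≤ -ω :=
  stmt_9_general k g μp μm ρp ρm γw γd hk hg hμp hμm hρp hγw hγd l1f l2f l1h l2h h1f h2f h1h h2h
    hstab
end

section
/- Fix real constants k > 0, g > 0, μ₊ > 0, μ₋ > 0, ρ₊ > 0, ρ₋ > 0 and γ_w ≥ 0, γ_d ≥ 0, and assume g(ρ₋−ρ₊) + γ_w < 0. With λ1f, λ2f, λ1h, λ2h as below, the number Λ₊(1) = (λ1f(1)+λ2h(1) + √((λ1f(1)−λ2h(1))² + 4·λ1h(1)·λ2f(1)))/2 (real square root) is strictly positive, and the expression under the square root is strictly positive. -/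
/-- In the unstable regime `g(ρ₋−ρ₊) + γ_w < 0`, the eigenvalue `Λ₊(1)` of the
linearized two-phase Muskat operator is strictly positive, and the expression
under the square root is strictly positive. -/
theorem stmt_11
    (k g μp μm ρp ρm γw γd : ℝ)
    (hk : 0 < k) (hg : 0 < g) (hμp : 0 < μp) (hμm : 0 < μm)
    (hρp : 0 < ρp) (hρm : 0 < ρm) (hγw : 0 ≤ γw) (hγd : 0 ≤ γd)
    (l1f l2f l1h l2h : ℕ → ℝ)
    (h1f : ∀ m : ℕ, 1 ≤ m → l1f m =
      -((g * (ρm - ρp) + γw * (m : ℝ) ^ 2) * (k * m) / ((μp + μm) * Real.tanh m)))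
    (h2f : ∀ m : ℕ, 1 ≤ m → l2f m =
      -((g * (ρm - ρp) + γw * (m : ℝ) ^ 2) * (k * m) / ((μp + μm) * Real.sinh m)))
    (h1h : ∀ m : ℕ, 1 ≤ m → l1h m =
      -((g * ρp + γd * (m : ℝ) ^ 2) * (k * m) / ((μp + μm) * Real.sinh m)))
    (h2h : ∀ m : ℕ, 1 ≤ m → l2h m =
      -((g * ρp + γd * (m : ℝ) ^ 2) * (k * m / (μp + μm)) *
        ((μm * (Real.cosh m ^ 2 - 1) + μp * Real.cosh m ^ 2) /
          (μp * Real.sinh m * Real.cosh m))))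
    (hunstab : g * (ρm - ρp) + γw < 0) :
    0 < (l1f 1 - l2h 1) ^ 2 + 4 * l1h 1 * l2f 1 ∧
    0 < (l1f 1 + l2h 1 +
      Real.sqrt ((l1f 1 - l2h 1) ^ 2 + 4 * l1h 1 * l2f 1)) / 2 := by
  have hs : 0 < Real.sinh 1 := by have := Real.sinh_lt_sinh.mpr (show (0:ℝ) < 1 from one_pos); simpa using this
  have hc : 0 < Real.cosh (1:ℝ) := Real.cosh_pos 1
  have hμ : 0 < μp + μm := by linarith
  have e1 := h1f 1 le_rfl
  have e2 := h2f 1 le_rfl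
  have e3 := h1h 1 le_rfl
  have e4 := h2h 1 le_rfl
  simp only [Nat.cast_one, one_pow, mul_one] at e1 e2 e3 e4
  rw [Real.tanh_eq_sinh_div_cosh] at e1
  rw [Real.cosh_sq] at e4
  have hA : 0 < -(g * (ρm - ρp) + γw) := by linarith
  have hB : 0 < g * ρp + γd := by positivity
  have hkey : 0 < l1h 1 * l2f 1 - l1f 1 * l2h 1 := by
    have heq : l1h 1 * l2f 1 - l1f 1 * l2h 1 =
        (-(g * (ρm - ρp) + γw)) * (g * ρp + γd) * k ^ 2 / ((μp + μm) * μp) := by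
      rw [e1, e2, e3, e4]
      field_simp
      ring
    rw [heq]
    positivity
  have hD : (l1f 1 + l2h 1) ^ 2 < (l1f 1 - l2h 1) ^ 2 + 4 * l1h 1 * l2f 1 := by
    nlinarith [hkey]
  constructor
  · nlinarith [sq_nonneg (l1f 1 + l2h 1), hD]
  · have habs : |l1f 1 + l2h 1| <
        Real.sqrt ((l1f 1 - l2h 1) ^ 2 + 4 * l1h 1 * l2f 1) := by
      rw [Real.lt_sqrt (abs_nonneg _), sq_abs]
      exact hD
    have := neg_abs_le (l1f 1 + l2h 1)
    linarith
end

section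
/- Fix real constants k > 0, g > 0, μ₊ > 0, μ₋ > 0, ρ₊ > 0, ρ₋ > 0 and γ_w > 0, γ_d ≥ 0. With λ1f, λ2f, λ1h, λ2h as below and Λ±(m) = (λ1f(m)+λ2h(m) ± √((λ1f(m)−λ2h(m))² + 4·λ1h(m)·λ2f(m)))/2 (real square root), both sequences (Λ₊(m))_{m≥1} and (Λ₋(m))_{m≥1} tend to −∞ as m → ∞. -/
/-!
The diagonal entries `λ1f` and `λ2h` of the linearized operator decay to `−∞` linearly (or
faster) in the wave number `m`, while the off-diagonal entries `λ1h` and `λ2f` carry a factor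
`1 / sinh m` that beats their polynomial growth, so `λ1h λ2f → 0`. Hence
`√((λ1f − λ2h)² + 4 λ1h λ2f) ≤ |λ1f − λ2h| + 1` eventually, which gives
`Λ₋ ≤ Λ₊ ≤ max λ1f λ2h + 1/2 → −∞`.
-/

open Real Filter Asymptotics

lemma half_add_add_sqrt_le_max {a d p q : ℝ} (hq : 0 ≤ q) (hp : p ≤ q ^ 2) :
    (a + d + √((a - d) ^ 2 + p)) / 2 ≤ max a d + q / 2 := by
  have hsqrt : √((a - d) ^ 2 + p) ≤ |a - d| + q := by
    rw [sqrt_le_left (by positivity)]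
    nlinarith [sq_abs (a - d), abs_nonneg (a - d)]
  rcases abs_cases (a - d) with ⟨habs, -⟩ | ⟨habs, -⟩ <;>
    linarith [le_max_left a d, le_max_right a d]

lemma tendsto_max_atBot {α : Type*} {l : Filter α} {f g : α → ℝ}
    (hf : Tendsto f l atBot) (hg : Tendsto g l atBot) :
    Tendsto (fun x => max (f x) (g x)) l atBot :=
  tendsto_atBot.2 fun b => ((hf.eventually_le_atBot b).and (hg.eventually_le_atBot b)).mono
    fun _ h => max_le h.1 h.2

lemma tendsto_half_add_add_sqrt_atBot {α : Type*} {l : Filter α} {a d p : α → ℝ} {B : ℝ}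
    (ha : Tendsto a l atBot) (hd : Tendsto d l atBot) (hp : ∀ᶠ x in l, p x ≤ B) :
    Tendsto (fun x => (a x + d x + √((a x - d x) ^ 2 + p x)) / 2) l atBot := by
  refine tendsto_atBot_mono' l (hp.mono fun x hx => half_add_add_sqrt_le_max (q := √|B|)
    (sqrt_nonneg _) ?_) (tendsto_atBot_add_const_right _ _ (tendsto_max_atBot ha hd))
  rw [sq_sqrt (abs_nonneg B)]
  exact hx.trans (le_abs_self B)

lemma exp_isBigO_sinh : exp =O[atTop] sinh := by
  refine IsBigO.of_bound 4 ((eventually_ge_atTop 1).mono fun x hx => ?_)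
  have hexp : 2 ≤ exp x := by linarith [add_one_le_exp x]
  have hexp_neg : exp (-x) ≤ 1 := exp_le_one_iff.2 (by linarith)
  rw [norm_of_nonneg (exp_pos x).le, norm_of_nonneg (sinh_nonneg_iff.2 (by linarith)), sinh_eq]
  linarith

lemma isLittleO_pow_sinh (n : ℕ) : (fun x : ℝ => x ^ n) =o[atTop] sinh :=
  isLittleO_pow_exp_atTop.trans_isBigO exp_isBigO_sinh

lemma tendsto_neg_cubic_div_sinh (a b k μ : ℝ) :
    Tendsto (fun x : ℝ => -((a + b * x ^ 2) * (k * x) / (μ * sinh x))) atTop (nhds 0) := by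
  have hcubic : (fun x : ℝ => (a + b * x ^ 2) * x) =o[atTop] sinh := by
    have h := ((isLittleO_pow_sinh 1).const_mul_left a).add
      ((isLittleO_pow_sinh 3).const_mul_left b)
    refine h.congr_left fun x => ?_
    ring
  have h := (hcubic.tendsto_div_nhds_zero.const_mul (k / μ)).neg
  rw [mul_zero, neg_zero] at h
  refine h.congr fun x => ?_
  ring

lemma one_le_weighted_cosh_sq_div_sinh_mul_cosh {μp μm x : ℝ} (hμp : 0 < μp)
    (hμm : 0 ≤ μm) (hx : 0 < x) :
    1 ≤ (μm * (cosh x ^ 2 - 1) + μp * cosh x ^ 2) / (μp * sinh x * cosh x) := by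
  have hsinh_cosh : sinh x * cosh x ≤ cosh x ^ 2 := by
    nlinarith [sinh_lt_cosh x, cosh_pos x]
  have hcosh_sq : 0 ≤ cosh x ^ 2 - 1 := by nlinarith [one_le_cosh x]
  rw [one_le_div (by positivity)]
  nlinarith [mul_le_mul_of_nonneg_left hsinh_cosh hμp.le, mul_nonneg hμm hcosh_sq]

lemma tendsto_neg_cubic_div_tanh_atBot (a : ℝ) {γ k μ : ℝ} (hγ : 0 < γ) (hk : 0 < k)
    (hμ : 0 < μ) :
    Tendsto (fun x : ℝ => -((a + γ * x ^ 2) * (k * x) / (μ * tanh x))) atTop atBot := by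
  have hquad : Tendsto (fun x : ℝ => a + γ * x ^ 2) atTop atTop :=
    tendsto_atTop_add_const_left _ a ((tendsto_pow_atTop two_ne_zero).const_mul_atTop hγ)
  have hcubic : Tendsto (fun x : ℝ => (a + γ * x ^ 2) * (k * x) / μ) atTop atTop :=
    (hquad.atTop_mul_atTop₀ (tendsto_id.const_mul_atTop hk)).atTop_div_const hμ
  refine tendsto_atBot_mono' _ ?_ (tendsto_neg_atTop_atBot.comp hcubic)
  filter_upwards [hcubic.eventually_ge_atTop 0, eventually_gt_atTop 0] with x hnonneg hx
  have htanh : 0 < tanh x := by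
    rw [tanh_eq_sinh_div_cosh]
    exact div_pos (sinh_pos_iff.2 hx) (cosh_pos x)
  rw [Function.comp_apply, neg_le_neg_iff, ← div_div]
  exact le_div_self hnonneg htanh (tanh_lt_one x).le

lemma tendsto_neg_mul_weighted_cosh_sq_atBot {a b k μp μm : ℝ} (ha : 0 < a) (hb : 0 ≤ b)
    (hk : 0 < k) (hμp : 0 < μp) (hμm : 0 ≤ μm) :
    Tendsto (fun x : ℝ => -((a + b * x ^ 2) * (k * x / (μp + μm)) *
      ((μm * (cosh x ^ 2 - 1) + μp * cosh x ^ 2) / (μp * sinh x * cosh x)))) atTop atBot := by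
  have hlin : Tendsto (fun x : ℝ => a * (k * x / (μp + μm))) atTop atTop :=
    ((tendsto_id.const_mul_atTop hk).atTop_div_const (by positivity)).const_mul_atTop ha
  refine tendsto_atBot_mono' _ ?_ (tendsto_neg_atTop_atBot.comp hlin)
  filter_upwards [eventually_gt_atTop 0] with x hx
  have hkx : 0 ≤ k * x / (μp + μm) := by positivity
  rw [Function.comp_apply, neg_le_neg_iff]
  calc a * (k * x / (μp + μm)) ≤ (a + b * x ^ 2) * (k * x / (μp + μm)) := by
        gcongr; nlinarith [sq_nonneg x]
    _ ≤ _ := le_mul_of_one_le_right (by positivity)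
        (one_le_weighted_cosh_sq_div_sinh_mul_cosh hμp hμm hx)

lemma tendsto_of_eventually_eq_comp_natCast {f : ℝ → ℝ} {u : ℕ → ℝ} {l : Filter ℝ}
    (hf : Tendsto f atTop l) (hu : ∀ m : ℕ, 1 ≤ m → u m = f m) : Tendsto u atTop l :=
  (hf.comp tendsto_natCast_atTop_atTop).congr'
    ((eventually_ge_atTop 1).mono fun m hm => (hu m hm).symm)

theorem stmt_12_general
    (k g μp μm ρp ρm γw γd : ℝ)
    (hk : 0 < k) (hg : 0 < g) (hμp : 0 < μp) (hμm : 0 < μm)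
    (hρp : 0 < ρp) (hγw : 0 < γw) (hγd : 0 ≤ γd)
    (l1f l2f l1h l2h : ℕ → ℝ)
    (h1f : ∀ m : ℕ, 1 ≤ m → l1f m =
      -((g * (ρm - ρp) + γw * (m : ℝ) ^ 2) * (k * m) / ((μp + μm) * Real.tanh m)))
    (h2f : ∀ m : ℕ, 1 ≤ m → l2f m =
      -((g * (ρm - ρp) + γw * (m : ℝ) ^ 2) * (k * m) / ((μp + μm) * Real.sinh m)))
    (h1h : ∀ m : ℕ, 1 ≤ m → l1h m =
      -((g * ρp + γd * (m : ℝ) ^ 2) * (k * m) / ((μp + μm) * Real.sinh m)))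
    (h2h : ∀ m : ℕ, 1 ≤ m → l2h m =
      -((g * ρp + γd * (m : ℝ) ^ 2) * (k * m / (μp + μm)) *
        ((μm * (Real.cosh m ^ 2 - 1) + μp * Real.cosh m ^ 2) /
          (μp * Real.sinh m * Real.cosh m))))
    :
    Filter.Tendsto (fun m : ℕ =>
      (l1f m + l2h m +
        Real.sqrt ((l1f m - l2h m) ^ 2 + 4 * l1h m * l2f m)) / 2)
      Filter.atTop Filter.atBot ∧
    Filter.Tendsto (fun m : ℕ =>
      (l1f m + l2h m -
        Real.sqrt ((l1f m - l2h m) ^ 2 + 4 * l1h m * l2f m)) / 2)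
      Filter.atTop Filter.atBot := by
  have h1f_lim : Tendsto l1f atTop atBot := tendsto_of_eventually_eq_comp_natCast
    (tendsto_neg_cubic_div_tanh_atBot _ hγw hk (by positivity)) h1f
  have h2h_lim : Tendsto l2h atTop atBot := tendsto_of_eventually_eq_comp_natCast
    (tendsto_neg_mul_weighted_cosh_sq_atBot (by positivity) hγd hk hμp hμm.le) h2h
  have h1h_lim : Tendsto l1h atTop (nhds 0) :=
    tendsto_of_eventually_eq_comp_natCast (tendsto_neg_cubic_div_sinh _ _ _ _) h1h
  have h2f_lim : Tendsto l2f atTop (nhds 0) :=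
    tendsto_of_eventually_eq_comp_natCast (tendsto_neg_cubic_div_sinh _ _ _ _) h2f
  have hoff : Tendsto (fun m => 4 * l1h m * l2f m) atTop (nhds 0) := by
    simpa using (h1h_lim.const_mul 4).mul h2f_lim
  have hplus := tendsto_half_add_add_sqrt_atBot h1f_lim h2h_lim
    (hoff.eventually (ge_mem_nhds zero_lt_one))
  refine ⟨hplus, tendsto_atBot_mono (fun m => ?_) hplus⟩
  linarith [sqrt_nonneg ((l1f m - l2h m) ^ 2 + 4 * l1h m * l2f m)]

/-- With surface tension `γ_w > 0`, both eigenvalue sequences `Λ₊(m)` and `Λ₋(m)`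
of the linearized two-phase Muskat operator tend to `−∞` as `m → ∞`. -/
theorem stmt_12
    (k g μp μm ρp ρm γw γd : ℝ)
    (hk : 0 < k) (hg : 0 < g) (hμp : 0 < μp) (hμm : 0 < μm)
    (hρp : 0 < ρp) (hρm : 0 < ρm) (hγw : 0 < γw) (hγd : 0 ≤ γd)
    (l1f l2f l1h l2h : ℕ → ℝ)
    (h1f : ∀ m : ℕ, 1 ≤ m → l1f m =
      -((g * (ρm - ρp) + γw * (m : ℝ) ^ 2) * (k * m) / ((μp + μm) * Real.tanh m)))
    (h2f : ∀ m : ℕ, 1 ≤ m → l2f m =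
      -((g * (ρm - ρp) + γw * (m : ℝ) ^ 2) * (k * m) / ((μp + μm) * Real.sinh m)))
    (h1h : ∀ m : ℕ, 1 ≤ m → l1h m =
      -((g * ρp + γd * (m : ℝ) ^ 2) * (k * m) / ((μp + μm) * Real.sinh m)))
    (h2h : ∀ m : ℕ, 1 ≤ m → l2h m =
      -((g * ρp + γd * (m : ℝ) ^ 2) * (k * m / (μp + μm)) *
        ((μm * (Real.cosh m ^ 2 - 1) + μp * Real.cosh m ^ 2) /
          (μp * Real.sinh m * Real.cosh m))))
    :
    Filter.Tendsto (fun m : ℕ =>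
      (l1f m + l2h m +
        Real.sqrt ((l1f m - l2h m) ^ 2 + 4 * l1h m * l2f m)) / 2)
      Filter.atTop Filter.atBot ∧
    Filter.Tendsto (fun m : ℕ =>
      (l1f m + l2h m -
        Real.sqrt ((l1f m - l2h m) ^ 2 + 4 * l1h m * l2f m)) / 2)
      Filter.atTop Filter.atBot :=
  stmt_12_general k g μp μm ρp ρm γw γd hk hg hμp hμm hρp hγw hγd l1f l2f l1h l2h h1f h2f h1h h2h
end

section
/- Fix real constants k > 0, g > 0, μ₊ > 0, μ₋ > 0, ρ₊ > 0, ρ₋ > 0 with ρ₊ > ρ₋, fix γ_d ≥ 0, an integer l ≥ 1, and set γ_w = g(ρ₊−ρ₋)/l². With λ1f, λ2f, λ1h, λ2h as below (evaluated with this γ_w), one has λ1f(l) = 0 and λ2f(l) = 0; moreover Λ₊(l) = (λ1f(l)+λ2h(l) + √((λ1f(l)−λ2h(l))² + 4·λ1h(l)·λ2f(l)))/2 = 0 and Λ₋(l) = λ2h(l) < 0. -/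
/-- At the bifurcation value `γ_w = g(ρ₊−ρ₋)/l²` the symbols satisfy
`λ1f(l) = λ2f(l) = 0`, the eigenvalue `Λ₊(l)` vanishes, and `Λ₋(l) = λ2h(l) < 0`. -/
theorem stmt_13
    (k g μp μm ρp ρm γw γd : ℝ)
    (hk : 0 < k) (hg : 0 < g) (hμp : 0 < μp) (hμm : 0 < μm)
    (hρp : 0 < ρp) (hρm : 0 < ρm) (hρ : ρm < ρp) (hγd : 0 ≤ γd)
    (l1f l2f l1h l2h : ℕ → ℝ)
    (h1f : ∀ m : ℕ, 1 ≤ m → l1f m =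
      -((g * (ρm - ρp) + γw * (m : ℝ) ^ 2) * (k * m) / ((μp + μm) * Real.tanh m)))
    (h2f : ∀ m : ℕ, 1 ≤ m → l2f m =
      -((g * (ρm - ρp) + γw * (m : ℝ) ^ 2) * (k * m) / ((μp + μm) * Real.sinh m)))
    (h1h : ∀ m : ℕ, 1 ≤ m → l1h m =
      -((g * ρp + γd * (m : ℝ) ^ 2) * (k * m) / ((μp + μm) * Real.sinh m)))
    (h2h : ∀ m : ℕ, 1 ≤ m → l2h m =
      -((g * ρp + γd * (m : ℝ) ^ 2) * (k * m / (μp + μm)) *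
        ((μm * (Real.cosh m ^ 2 - 1) + μp * Real.cosh m ^ 2) /
          (μp * Real.sinh m * Real.cosh m))))
    (l : ℕ) (hl : 1 ≤ l)
    (hγwdef : γw = g * (ρp - ρm) / (l : ℝ) ^ 2) :
    l1f l = 0 ∧ l2f l = 0 ∧
    (l1f l + l2h l +
      Real.sqrt ((l1f l - l2h l) ^ 2 + 4 * l1h l * l2f l)) / 2 = 0 ∧
    (l1f l + l2h l -
      Real.sqrt ((l1f l - l2h l) ^ 2 + 4 * l1h l * l2f l)) / 2 = l2h l ∧
    l2h l < 0 := by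
  have hlpos : (0 : ℝ) < (l : ℝ) := by exact_mod_cast hl
  have hl2 : ((l : ℝ) ^ 2) ≠ 0 := by positivity
  have hnum : g * (ρm - ρp) + γw * (l : ℝ) ^ 2 = 0 := by
    rw [hγwdef]; field_simp; ring
  have e1f : l1f l = 0 := by rw [h1f l hl, hnum]; ring
  have e2f : l2f l = 0 := by rw [h2f l hl, hnum]; ring
  have hsinh : 0 < Real.sinh (l : ℝ) := Real.sinh_pos_iff.2 hlpos
  have hcosh : 1 < Real.cosh (l : ℝ) := by
    have := Real.one_lt_cosh.2 (by positivity : ((l:ℝ)) ≠ 0)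
    simpa using this
  have hcoshpos : 0 < Real.cosh (l : ℝ) := by linarith
  have e2h : l2h l < 0 := by
    rw [h2h l hl]
    have h1 : 0 < g * ρp + γd * (l : ℝ) ^ 2 := by positivity
    have h2 : 0 < k * (l : ℝ) / (μp + μm) := by positivity
    have h3 : 0 < (μm * (Real.cosh (l:ℝ) ^ 2 - 1) + μp * Real.cosh (l:ℝ) ^ 2) /
        (μp * Real.sinh (l:ℝ) * Real.cosh (l:ℝ)) := by
      apply div_pos
      · nlinarith [mul_pos (sub_pos.2 hcosh) hcoshpos]
      · positivity
    have := mul_pos (mul_pos h1 h2) h3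
    linarith
  have hsq : Real.sqrt ((l1f l - l2h l) ^ 2 + 4 * l1h l * l2f l) = -(l2h l) := by
    rw [e1f, e2f]
    have : (0 - l2h l) ^ 2 + 4 * l1h l * 0 = (-(l2h l)) ^ 2 := by ring
    rw [this, Real.sqrt_sq (by linarith)]
  refine ⟨e1f, e2f, ?_, ?_, e2h⟩ <;> rw [hsq, e1f] <;> ring
end

section
/- Fix real constants k > 0, g > 0, μ₊ > 0, μ₋ > 0, ρ₊ > 0, ρ₋ > 0 with ρ₊ > ρ₋, fix γ_d ≥ 0, an integer l ≥ 2, and set γ_w = g(ρ₊−ρ₋)/l². With λ1f, λ2f, λ1h, λ2h as below (evaluated with this γ_w), the number Λ₊(1) = (λ1f(1)+λ2h(1) + √((λ1f(1)−λ2h(1))² + 4·λ1h(1)·λ2f(1)))/2 (real square root) is strictly positive. -/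
set_option maxHeartbeats 1000000

/-- If the determinant `a*d - b*c` is negative, the larger eigenvalue of the
corresponding 2×2 matrix is positive. -/
lemma aux_eig_pos (a b c d : ℝ) (h : a * d - b * c < 0) :
    0 < (a + d + Real.sqrt ((a - d) ^ 2 + 4 * b * c)) / 2 := by
  have h1 : (a + d) ^ 2 < (a - d) ^ 2 + 4 * b * c := by nlinarith
  have h2 : |a + d| < Real.sqrt ((a - d) ^ 2 + 4 * b * c) := by
    rw [← Real.sqrt_sq_eq_abs]
    exact Real.sqrt_lt_sqrt (sq_nonneg _) h1
  have h3 := neg_abs_le (a + d)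
  linarith

/-- At the bifurcation value `γ_w = g(ρ₊−ρ₋)/l²` with `l ≥ 2`, the eigenvalue
`Λ₊(1)` of the linearized two-phase Muskat operator is strictly positive. -/
theorem stmt_14
    (k g μp μm ρp ρm γw γd : ℝ)
    (hk : 0 < k) (hg : 0 < g) (hμp : 0 < μp) (hμm : 0 < μm)
    (hρp : 0 < ρp) (hρm : 0 < ρm) (hρ : ρm < ρp) (hγd : 0 ≤ γd)
    (l1f l2f l1h l2h : ℕ → ℝ)
    (h1f : ∀ m : ℕ, 1 ≤ m → l1f m =
      -((g * (ρm - ρp) + γw * (m : ℝ) ^ 2) * (k * m) / ((μp + μm) * Real.tanh m)))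
    (h2f : ∀ m : ℕ, 1 ≤ m → l2f m =
      -((g * (ρm - ρp) + γw * (m : ℝ) ^ 2) * (k * m) / ((μp + μm) * Real.sinh m)))
    (h1h : ∀ m : ℕ, 1 ≤ m → l1h m =
      -((g * ρp + γd * (m : ℝ) ^ 2) * (k * m) / ((μp + μm) * Real.sinh m)))
    (h2h : ∀ m : ℕ, 1 ≤ m → l2h m =
      -((g * ρp + γd * (m : ℝ) ^ 2) * (k * m / (μp + μm)) *
        ((μm * (Real.cosh m ^ 2 - 1) + μp * Real.cosh m ^ 2) /
          (μp * Real.sinh m * Real.cosh m))))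
    (l : ℕ) (hl : 2 ≤ l)
    (hγwdef : γw = g * (ρp - ρm) / (l : ℝ) ^ 2) :
    0 < (l1f 1 + l2h 1 +
      Real.sqrt ((l1f 1 - l2h 1) ^ 2 + 4 * l1h 1 * l2f 1)) / 2 := by
  have ha := h1f 1 le_rfl
  have hc := h2f 1 le_rfl
  have hb := h1h 1 le_rfl
  have hd := h2h 1 le_rfl
  simp only [Nat.cast_one, one_pow, mul_one] at ha hb hc hd
  set s := Real.sinh 1 with hsdef
  set C := Real.cosh 1 with hCdef
  have hs : 0 < s := Real.sinh_pos_iff.2 one_pos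
  have hC : 0 < C := Real.cosh_pos 1
  have hC2 : C ^ 2 = s ^ 2 + 1 := Real.cosh_sq 1
  have hT : Real.tanh 1 = s / C := Real.tanh_eq_sinh_div_cosh 1
  -- sign of E := g*(ρm-ρp)+γw
  have hl2 : (2 : ℝ) ≤ (l : ℝ) := by exact_mod_cast hl
  have hE : g * (ρm - ρp) + γw < 0 := by
    have hlt : g * (ρp - ρm) / (l : ℝ) ^ 2 < g * (ρp - ρm) := by
      apply div_lt_self (by nlinarith) (by nlinarith)
    rw [hγwdef]; nlinarith
  have hF : 0 < g * ρp + γd := by nlinarith [mul_pos hμm (mul_pos hs hs), mul_pos hμp (mul_pos hs hs)]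
  have hμ : (0 : ℝ) < μp + μm := by linarith
  apply aux_eig_pos
  have key : l1f 1 * l2h 1 - l1h 1 * l2f 1 =
      (g * (ρm - ρp) + γw) * (g * ρp + γd) * k ^ 2 *
        (μm * (C ^ 2 - 1) + μp * C ^ 2 - μp) / ((μp + μm) ^ 2 * μp * s ^ 2) := by
    rw [ha, hb, hc, hd, hT]
    field_simp
  rw [key]
  apply div_neg_of_neg_of_pos
  · have hP : 0 < μm * (C ^ 2 - 1) + μp * C ^ 2 - μp := by nlinarith [mul_pos hμm (mul_pos hs hs), mul_pos hμp (mul_pos hs hs)]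
    have := mul_pos hF (mul_pos (mul_pos hk hk) hP)
    nlinarith
  · positivity
end

section
/- Let γ ≥ 0, c > 0 and d be real constants, and let h : ℝ → ℝ be a twice continuously differentiable 2π-periodic function satisfying γ·h''(x)/(1+h'(x)²)^{3/2} − c·h(x) = d for every x ∈ ℝ. Then h is constant, equal to −d/c. -/
/-!
At a maximum point of `h` the curvature `κ(h)` is `≤ 0`, so the equation gives `c · max h ≤ -d`;
at a minimum point it is `≥ 0`, giving `c · min h ≥ -d`. Hence `max h ≤ -d/c ≤ min h`.
Periodicity and continuity make both extrema attained.
-/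

open Filter Topology Set

namespace Function.Periodic

variable {α : Type*} [TopologicalSpace α] [LinearOrder α] {f : ℝ → α} {c : ℝ}

theorem exists_forall_ge_of_continuous [ClosedIciTopology α] (hp : Periodic f c) (hc : c ≠ 0)
    (hf : Continuous f) : ∃ x₀, ∀ x, f x ≤ f x₀ := by
  obtain ⟨_, ⟨x₀, rfl⟩, hmax⟩ := (hp.compact_of_continuous hc hf).exists_isGreatest (range_nonempty f)
  exact ⟨x₀, fun x => hmax (mem_range_self x)⟩

theorem exists_forall_le_of_continuous [ClosedIicTopology α] (hp : Periodic f c) (hc : c ≠ 0)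
    (hf : Continuous f) : ∃ x₀, ∀ x, f x₀ ≤ f x := by
  obtain ⟨_, ⟨x₀, rfl⟩, hmin⟩ := (hp.compact_of_continuous hc hf).exists_isLeast (range_nonempty f)
  exact ⟨x₀, fun x => hmin (mem_range_self x)⟩

end Function.Periodic

section SecondDerivative

variable {f : ℝ → ℝ} {x₀ : ℝ}

theorem IsLocalMin.deriv_deriv_eq_zero_of_isLocalMax (hmin : IsLocalMin f x₀)
    (hmax : IsLocalMax f x₀) : deriv (deriv f) x₀ = 0 := by
  have hconst : f =ᶠ[𝓝 x₀] fun _ => f x₀ :=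
    (hmax.and hmin).mono fun _ hx => le_antisymm hx.1 hx.2
  have hderiv : deriv f =ᶠ[𝓝 x₀] fun _ => 0 :=
    hconst.eventuallyEq_nhds.mono fun _ hx => by rw [hx.deriv_eq, deriv_const]
  rw [hderiv.deriv_eq, deriv_const]

/- If `f'' x₀ > 0`, the second-derivative test makes `x₀` also a local minimum, so `f` is locally
constant there and `f'' x₀ = 0`. -/
theorem IsLocalMax.deriv_deriv_nonpos (h : IsLocalMax f x₀) (hc : ContinuousAt f x₀) :
    deriv (deriv f) x₀ ≤ 0 := by
  by_contra! hpos
  exact hpos.ne' <|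
    (isLocalMin_of_deriv_deriv_pos hpos h.deriv_eq_zero hc).deriv_deriv_eq_zero_of_isLocalMax h

theorem IsLocalMin.deriv_deriv_nonneg (h : IsLocalMin f x₀) (hc : ContinuousAt f x₀) :
    0 ≤ deriv (deriv f) x₀ := by
  by_contra! hneg
  exact hneg.ne <|
    h.deriv_deriv_eq_zero_of_isLocalMax (isLocalMax_of_deriv_deriv_neg hneg h.deriv_eq_zero hc)

end SecondDerivative

/-- Rigidity for the fluid–air interface: a `2π`-periodic `C²` solution of
`γ·κ(h) − c·h = d` with `γ ≥ 0` and `c > 0` is constant, equal to `−d/c`. -/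
theorem stmt_15 (γ c d : ℝ) (hγ : 0 ≤ γ) (hc : 0 < c)
    (h : ℝ → ℝ) (hreg : ContDiff ℝ 2 h)
    (hper : ∀ x : ℝ, h (x + 2 * Real.pi) = h x)
    (heq : ∀ x : ℝ,
      γ * deriv (deriv h) x / (1 + deriv h x ^ 2) ^ ((3 : ℝ) / 2) - c * h x = d) :
    ∀ x : ℝ, h x = -d / c := by
  have hP : Function.Periodic h (2 * Real.pi) := hper
  have hcont : Continuous h := hreg.continuous
  obtain ⟨x₁, hx₁⟩ := hP.exists_forall_ge_of_continuous Real.two_pi_pos.ne' hcont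
  obtain ⟨x₂, hx₂⟩ := hP.exists_forall_le_of_continuous Real.two_pi_pos.ne' hcont
  have hmax : IsLocalMax h x₁ := Eventually.of_forall hx₁
  have hmin : IsLocalMin h x₂ := Eventually.of_forall hx₂
  have hupper : h x₁ ≤ -d / c := by
    have hκ : γ * deriv (deriv h) x₁ / (1 + deriv h x₁ ^ 2) ^ ((3 : ℝ) / 2) ≤ 0 :=
      div_nonpos_of_nonpos_of_nonneg (mul_nonpos_of_nonneg_of_nonpos hγ
        (hmax.deriv_deriv_nonpos hcont.continuousAt)) (by positivity)
    rw [le_div_iff₀ hc]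
    linarith [heq x₁]
  have hlower : -d / c ≤ h x₂ := by
    have hκ : 0 ≤ γ * deriv (deriv h) x₂ / (1 + deriv h x₂ ^ 2) ^ ((3 : ℝ) / 2) :=
      div_nonneg (mul_nonneg hγ
        (hmin.deriv_deriv_nonneg hcont.continuousAt)) (by positivity)
    rw [div_le_iff₀ hc]
    linarith [heq x₂]
  exact fun x => le_antisymm ((hx₁ x).trans hupper) (hlower.trans (hx₂ x))
end

section
/- Let a > 0 be a real constant and let p : ℝ → ℝ be a twice continuously differentiable 2π-periodic function satisfying p''(x)/(1+p'(x)²)^{3/2} + a·p(x) = 0 for every x ∈ ℝ and p(0) = 0. Then p is odd: p(−x) = −p(x) for all x ∈ ℝ. In particular ∫ from −π to π of p(x) dx = 0. -/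
/-!
The capillarity equation, written as the first-order system `(p, p')' = V (p, p')` with
`V (y, z) = (z, -a y (1 + z²)^{3/2})`, is reversible: `V (-y, z) = (z, a y (1 + z²)^{3/2})`, so
with `σ (y, z) = (-y, z)` we have `V ∘ σ = -σ ∘ V`. Hence `t ↦ σ (p (-t), p' (-t))` solves the same
system, and it agrees with `(p, p')` at `t = 0` because `p 0 = 0`. Since `V` is `C¹`, hence
locally Lipschitz, uniqueness for the Cauchy problem gives `p t = -p (-t)`.
-/

open Set

section Autonomous

variable {E : Type*} [NormedAddCommGroup E] [NormedSpace ℝ E] {v : E → E} {f g : ℝ → E}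

theorem LocallyLipschitz.eq_of_hasDerivAt_of_eq (hv : LocallyLipschitz v)
    (hf : ∀ t, HasDerivAt f (v (f t)) t) (hg : ∀ t, HasDerivAt g (v (g t)) t)
    {t₀ : ℝ} (h : f t₀ = g t₀) : f = g := by
  ext t
  obtain ⟨A, B, ht, ht₀⟩ : ∃ A B, t ∈ Ioo A B ∧ t₀ ∈ Ioo A B :=
    ⟨min t t₀ - 1, max t t₀ + 1, by grind, by grind⟩
  set s := f '' Icc A B ∪ g '' Icc A B
  have hs : IsCompact s :=
    (isCompact_Icc.image (continuous_iff_continuousAt.2 fun t => (hf t).continuousAt)).union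
      (isCompact_Icc.image (continuous_iff_continuousAt.2 fun t => (hg t).continuousAt))
  obtain ⟨K, hK⟩ := (hv.locallyLipschitzOn (s := s)).exists_lipschitzOnWith_of_compact hs
  exact ODE_solution_unique_of_mem_Ioo (s := fun _ => s) (fun _ _ => hK) ht₀
    (fun t ht => ⟨hf t, .inl ⟨t, Ioo_subset_Icc_self ht, rfl⟩⟩)
    (fun t ht => ⟨hg t, .inr ⟨t, Ioo_subset_Icc_self ht, rfl⟩⟩) h ht

theorem hasDerivAt_reverse_of_anticommute (σ : E →L[ℝ] E) (hσ : ∀ y, v (σ y) = -σ (v y))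
    (hf : ∀ t, HasDerivAt f (v (f t)) t) (t : ℝ) :
    HasDerivAt (fun t => σ (f (-t))) (v (σ (f (-t)))) t := by
  have h := σ.hasFDerivAt.comp_hasDerivAt t ((hf (-t)).scomp t (hasDerivAt_neg t))
  rw [hσ]
  simpa [Function.comp_def] using h

end Autonomous

theorem intervalIntegral_eq_zero_of_odd {E : Type*} [NormedAddCommGroup E] [NormedSpace ℝ E]
    {f : ℝ → E} (hf : ∀ x, f (-x) = -f x) (c : ℝ) : ∫ x in -c..c, f x = 0 := by
  have h : ∫ x in -c..c, f x = -∫ x in -c..c, f x := by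
    calc ∫ x in -c..c, f x = ∫ x in -c..c, f (-x) := by
          rw [intervalIntegral.integral_comp_neg, neg_neg]
      _ = -∫ x in -c..c, f x := by simp_rw [hf, intervalIntegral.integral_neg]
  have h2 : (2 : ℝ) • ∫ x in -c..c, f x = 0 := by
    rw [two_smul, ← eq_neg_iff_add_eq_zero]
    exact h
  exact (smul_eq_zero.mp h2).resolve_left two_ne_zero

namespace Capillarity

noncomputable def field (a : ℝ) (y : ℝ × ℝ) : ℝ × ℝ :=
  (y.2, -(a * y.1) * (1 + y.2 ^ 2) ^ ((3 : ℝ) / 2))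

theorem contDiff_field (a : ℝ) : ContDiff ℝ 1 (field a) :=
  contDiff_snd.prodMk <| (contDiff_const.mul contDiff_fst).neg.mul <|
    (contDiff_const.add (contDiff_snd.pow 2)).rpow_const_of_ne fun _ => by positivity

def reflection : ℝ × ℝ →L[ℝ] ℝ × ℝ :=
  (-ContinuousLinearMap.fst ℝ ℝ ℝ).prod (ContinuousLinearMap.snd ℝ ℝ ℝ)

@[simp]
theorem reflection_apply (y : ℝ × ℝ) : reflection y = (-y.1, y.2) := rfl

theorem field_reflection (a : ℝ) (y : ℝ × ℝ) :
    field a (reflection y) = -reflection (field a y) := by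
  simp [field]

theorem hasDerivAt_phase {a : ℝ} {p : ℝ → ℝ} (hreg : ContDiff ℝ 2 p)
    (heq : ∀ x, deriv (deriv p) x / (1 + deriv p x ^ 2) ^ ((3 : ℝ) / 2) + a * p x = 0) (x : ℝ) :
    HasDerivAt (fun x => (p x, deriv p x)) (field a (p x, deriv p x)) x := by
  have hdp : ContDiff ℝ 1 (deriv p) := hreg.iterate_deriv' 1 1
  have hpp : deriv (deriv p) x = -(a * p x) * (1 + deriv p x ^ 2) ^ ((3 : ℝ) / 2) := by
    have hpos : 0 < (1 + deriv p x ^ 2) ^ ((3 : ℝ) / 2) := by positivity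
    rw [← div_eq_iff hpos.ne']
    linarith [heq x]
  have h := ((hreg.differentiable two_ne_zero x).hasDerivAt).prodMk
    ((hdp.differentiable one_ne_zero x).hasDerivAt)
  rwa [hpp] at h

end Capillarity

open Capillarity in
theorem stmt_17_general (a : ℝ)
    (p : ℝ → ℝ) (hreg : ContDiff ℝ 2 p)
    (heq : ∀ x : ℝ,
      deriv (deriv p) x / (1 + deriv p x ^ 2) ^ ((3 : ℝ) / 2) + a * p x = 0)
    (h0 : p 0 = 0) :
    (∀ x : ℝ, p (-x) = -p x) ∧ ∫ x in (-Real.pi)..Real.pi, p x = 0 := by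
  have hphase := hasDerivAt_phase hreg heq
  have hsym := (contDiff_field a).locallyLipschitz.eq_of_hasDerivAt_of_eq hphase
    (hasDerivAt_reverse_of_anticommute reflection (field_reflection a) hphase)
    (t₀ := 0) (by simp [h0])
  have hodd : ∀ x, p (-x) = -p x := fun x => by
    simpa using congrArg Prod.fst (congrFun hsym (-x))
  exact ⟨hodd, intervalIntegral_eq_zero_of_odd hodd Real.pi⟩

/-- Symmetry of periodic solutions of the capillarity equation: a `2π`-periodic `C²`
solution of `κ(p) + a·p = 0` with `a > 0` and `p(0) = 0` is odd, and in particular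
has zero integral mean over `[−π, π]`. -/
theorem stmt_17 (a : ℝ) (ha : 0 < a)
    (p : ℝ → ℝ) (hreg : ContDiff ℝ 2 p)
    (hper : ∀ x : ℝ, p (x + 2 * Real.pi) = p x)
    (heq : ∀ x : ℝ,
      deriv (deriv p) x / (1 + deriv p x ^ 2) ^ ((3 : ℝ) / 2) + a * p x = 0)
    (h0 : p 0 = 0) :
    (∀ x : ℝ, p (-x) = -p x) ∧ ∫ x in (-Real.pi)..Real.pi, p x = 0 :=
  stmt_17_general a p hreg heq h0
end

section
/- Let f, h : ℝ → ℝ be continuously differentiable 2π-periodic functions with f(x) < h(x) for all x, let Ω = {(x,y) ∈ ℝ² : f(x) < y < h(x)}, and let u be a twice continuously differentiable function on an open set containing the closure of Ω which is 2π-periodic in its first variable (u(x+2π,y) = u(x,y)) and harmonic on Ω (∂²u/∂x² + ∂²u/∂y² = 0 on Ω). Then ∫ from 0 to 2π of ( ∂u/∂y(x, h(x)) − h'(x)·∂u/∂x(x, h(x)) ) dx = ∫ from 0 to 2π of ( ∂u/∂y(x, f(x)) − f'(x)·∂u/∂x(x, f(x)) ) dx. -/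
/-!
Let `G x = ∫_{f x}^{h x} ∂ₓu(x, y) dy`. By the Leibniz rule for integrals with variable limits,
`G' = ∫_{f}^{h} ∂ₓₓu + h' ∂ₓu(·, h) - f' ∂ₓu(·, f)`, and harmonicity turns the integral into
`-∫_{f}^{h} ∂ᵧᵧu = ∂ᵧu(·, f) - ∂ᵧu(·, h)`. Hence `G'` is the flux through the lower graph minus
the flux through the upper graph, and its integral over a period vanishes because `G` is
`2π`-periodic.
-/

open MeasureTheory Set Filter Topology intervalIntegral

open scoped Interval

variable {E : Type*} [NormedAddCommGroup E] [NormedSpace ℝ E]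

/- Partial derivatives are taken along coordinate slices, so that they agree definitionally with
the iterated `deriv` expressions in which the theorem is stated. -/
noncomputable def partialFst (F : ℝ × ℝ → E) (p : ℝ × ℝ) : E := deriv (fun x => F (x, p.2)) p.1

noncomputable def partialSnd (F : ℝ × ℝ → E) (p : ℝ × ℝ) : E := deriv (fun y => F (p.1, y)) p.2

/-- Flux density of `∇F` through the graph of `g`, against the unnormalised normal `(-g', 1)`. -/
noncomputable def graphFlux (F : ℝ × ℝ → E) (g : ℝ → ℝ) (x : ℝ) : E :=
  partialSnd F (x, g x) - deriv g x • partialFst F (x, g x)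

section Partial

variable {F : ℝ × ℝ → E} {U : Set (ℝ × ℝ)} {p : ℝ × ℝ}

theorem DifferentiableAt.hasDerivAt_fst_slice (hF : DifferentiableAt ℝ F p) :
    HasDerivAt (fun x => F (x, p.2)) (fderiv ℝ F p (1, 0)) p.1 :=
  hF.hasFDerivAt.comp_hasDerivAt p.1 ((hasDerivAt_id p.1).prodMk (hasDerivAt_const p.1 p.2))

theorem DifferentiableAt.hasDerivAt_snd_slice (hF : DifferentiableAt ℝ F p) :
    HasDerivAt (fun y => F (p.1, y)) (fderiv ℝ F p (0, 1)) p.2 :=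
  hF.hasFDerivAt.comp_hasDerivAt p.2 ((hasDerivAt_const p.2 p.1).prodMk (hasDerivAt_id p.2))

theorem ContDiffOn.contDiffOn_partialFst {n : WithTop ℕ∞} (hU : IsOpen U)
    (hF : ContDiffOn ℝ (n + 1) F U) : ContDiffOn ℝ n (partialFst F) U := by
  refine ((ContinuousLinearMap.apply ℝ E ((1 : ℝ), (0 : ℝ))).contDiff.comp_contDiffOn
    (hF.fderiv_of_isOpen hU le_rfl)).congr fun p hp => ?_
  exact ((hF.differentiableOn (by simp)).differentiableAt (hU.mem_nhds hp)).hasDerivAt_fst_slice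
    |>.deriv

theorem ContDiffOn.contDiffOn_partialSnd {n : WithTop ℕ∞} (hU : IsOpen U)
    (hF : ContDiffOn ℝ (n + 1) F U) : ContDiffOn ℝ n (partialSnd F) U := by
  refine ((ContinuousLinearMap.apply ℝ E ((0 : ℝ), (1 : ℝ))).contDiff.comp_contDiffOn
    (hF.fderiv_of_isOpen hU le_rfl)).congr fun p hp => ?_
  exact ((hF.differentiableOn (by simp)).differentiableAt (hU.mem_nhds hp)).hasDerivAt_snd_slice
    |>.deriv

theorem ContDiffOn.hasDerivAt_partialFst {n : WithTop ℕ∞} (hU : IsOpen U)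
    (hF : ContDiffOn ℝ n F U) (hn : n ≠ 0) (hp : p ∈ U) :
    HasDerivAt (fun x => F (x, p.2)) (partialFst F p) p.1 :=
  ((hF.differentiableOn hn).differentiableAt (hU.mem_nhds hp)).hasDerivAt_fst_slice
    |>.differentiableAt.hasDerivAt

theorem ContDiffOn.hasDerivAt_partialSnd {n : WithTop ℕ∞} (hU : IsOpen U)
    (hF : ContDiffOn ℝ n F U) (hn : n ≠ 0) (hp : p ∈ U) :
    HasDerivAt (fun y => F (p.1, y)) (partialSnd F p) p.2 :=
  ((hF.differentiableOn hn).differentiableAt (hU.mem_nhds hp)).hasDerivAt_snd_slice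
    |>.differentiableAt.hasDerivAt

theorem partialFst_add_period {T : ℝ} (hF : ∀ x y, F (x + T, y) = F (x, y)) (x y : ℝ) :
    partialFst F (x + T, y) = partialFst F (x, y) := by
  simp only [partialFst, ← deriv_comp_add_const, hF]

theorem ContDiffOn.continuous_graphFlux {g : ℝ → ℝ} (hU : IsOpen U) (hF : ContDiffOn ℝ 2 F U)
    (hg : ContDiff ℝ 1 g) (hgU : ∀ x, (x, g x) ∈ U) : Continuous (graphFlux F g) :=
  ((hF.contDiffOn_partialSnd (n := 1) hU).continuousOn.comp_continuous (by fun_prop) hgU).sub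
    ((hg.continuous_deriv le_rfl).smul
      ((hF.contDiffOn_partialFst (n := 1) hU).continuousOn.comp_continuous (by fun_prop) hgU))

end Partial

section Leibniz

variable {V : ℝ × ℝ → E} {U : Set (ℝ × ℝ)} {x₀ : ℝ}

theorem eventually_forall_uIcc_mem_of_continuousAt {s : Set (ℝ × ℝ)} {b : ℝ → ℝ}
    (hs : s ∈ 𝓝 (x₀, b x₀)) (hb : ContinuousAt b x₀) :
    ∀ᶠ x in 𝓝 x₀, ∀ y ∈ [[b x₀, b x]], (x, y) ∈ s := by
  obtain ⟨ε, hε, hball⟩ := Metric.mem_nhds_iff.mp hs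
  filter_upwards [Metric.ball_mem_nhds x₀ hε, hb (Metric.ball_mem_nhds (b x₀) hε)]
    with x hx hbx y hy
  refine hball ?_
  rw [← ball_prod_same]
  exact ⟨hx, (Real.ball_eq_Ioo (b x₀) ε ▸ ordConnected_Ioo).uIcc_subset
    (Metric.mem_ball_self hε) hbx hy⟩

theorem eventually_forall_uIcc_mem (hU : IsOpen U) {a b : ℝ}
    (hseg : ∀ y ∈ [[a, b]], (x₀, y) ∈ U) : ∀ᶠ x in 𝓝 x₀, ∀ y ∈ [[a, b]], (x, y) ∈ U :=
  isCompact_uIcc.eventually_forall_of_forall_eventually (P := fun x y => (x, y) ∈ U)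
    fun y hy => hU.mem_nhds (hseg y hy)

theorem hasDerivAt_integral_of_contDiffOn (hU : IsOpen U) (hV : ContDiffOn ℝ 1 V U)
    {a b : ℝ} (hseg : ∀ y ∈ [[a, b]], (x₀, y) ∈ U) :
    HasDerivAt (fun x => ∫ y in a..b, V (x, y)) (∫ y in a..b, partialFst V (x₀, y)) x₀ := by
  obtain ⟨r, hr, hball⟩ :=
    Metric.nhds_basis_closedBall.mem_iff.mp (eventually_forall_uIcc_mem hU hseg)
  have hrect : Metric.closedBall x₀ r ×ˢ [[a, b]] ⊆ U := fun p hp => hball hp.1 p.2 hp.2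
  have hVx : ContinuousOn (partialFst V) U := (hV.contDiffOn_partialFst (n := 0) hU).continuousOn
  obtain ⟨M, hM⟩ := ((isCompact_closedBall x₀ r).prod isCompact_uIcc).exists_bound_of_continuousOn
    (hVx.mono hrect)
  have hmeas : ∀ {W : ℝ × ℝ → E}, ContinuousOn W U → ∀ x ∈ Metric.closedBall x₀ r,
      AEStronglyMeasurable (fun y => W (x, y)) (volume.restrict (Ι a b)) := fun hW x hx =>
    ((hW.comp (by fun_prop) (hball hx)).mono uIoc_subset_uIcc).aestronglyMeasurable
      measurableSet_uIoc
  refine (hasDerivAt_integral_of_dominated_loc_of_deriv_le (bound := fun _ => M)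
    (F' := fun x y => partialFst V (x, y)) (Metric.ball_mem_nhds x₀ hr) ?_
    (hV.continuousOn.comp (by fun_prop) hseg).intervalIntegrable
    (hmeas hVx x₀ (Metric.mem_closedBall_self hr.le)) ?_ intervalIntegrable_const ?_).2
  · filter_upwards [Metric.closedBall_mem_nhds x₀ hr] with x hx using hmeas hV.continuousOn x hx
  · exact ae_of_all _ fun y hy x hx =>
      hM (x, y) ⟨Metric.ball_subset_closedBall hx, uIoc_subset_uIcc hy⟩
  · exact ae_of_all _ fun y hy x hx => hV.hasDerivAt_partialFst (p := (x, y)) hU one_ne_zero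
      (hrect ⟨Metric.ball_subset_closedBall hx, uIoc_subset_uIcc hy⟩)

variable [CompleteSpace E]

theorem hasDerivAt_integral_upper_limit_of_continuousOn {s : Set (ℝ × ℝ)}
    (hV : ContinuousOn V s) {b : ℝ → ℝ} {b' : ℝ} (hs : s ∈ 𝓝 (x₀, b x₀))
    (hb : HasDerivAt b b' x₀) :
    HasDerivAt (fun x => ∫ y in b x₀..b x, V (x, y)) (b' • V (x₀, b x₀)) x₀ := by
  set c := V (x₀, b x₀)
  have hsmall : (fun x => ∫ y in b x₀..b x, (V (x, y) - c)) =o[𝓝 x₀] fun x => b x - b x₀ := by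
    refine Asymptotics.isLittleO_iff.mpr fun ε hε => ?_
    have hnear : ∀ᶠ p in 𝓝 (x₀, b x₀), ‖V p - c‖ ≤ ε := by
      filter_upwards [(hV.continuousAt hs).preimage_mem_nhds (Metric.closedBall_mem_nhds c hε)]
        with p hp
      simpa [dist_eq_norm] using hp
    filter_upwards [eventually_forall_uIcc_mem_of_continuousAt hnear hb.continuousAt] with x hx
    simpa [Real.norm_eq_abs, mul_comm] using
      norm_integral_le_of_norm_le_const fun y hy => hx y (uIoc_subset_uIcc hy)
  have hzero : HasDerivAt (fun x => ∫ y in b x₀..b x, (V (x, y) - c)) 0 x₀ := by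
    rw [hasDerivAt_iff_isLittleO]
    simpa using hsmall.trans_isBigO hb.isBigO_sub
  refine (add_zero (b' • c) ▸ ((hb.sub_const (b x₀)).smul_const c).add hzero)
    |>.congr_of_eventuallyEq ?_
  filter_upwards [eventually_forall_uIcc_mem_of_continuousAt hs hb.continuousAt] with x hx
  have hint : IntervalIntegrable (fun y => V (x, y)) volume (b x₀) (b x) :=
    (hV.comp (by fun_prop) hx).intervalIntegrable
  rw [Pi.add_apply, integral_sub hint intervalIntegrable_const, intervalIntegral.integral_const]
  abel

theorem hasDerivAt_integral_variable_limits_of_contDiffOn (hU : IsOpen U)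
    (hV : ContDiffOn ℝ 1 V U) {a b : ℝ → ℝ} {a' b' : ℝ} (ha : HasDerivAt a a' x₀)
    (hb : HasDerivAt b b' x₀) (hseg : ∀ y ∈ [[a x₀, b x₀]], (x₀, y) ∈ U) :
    HasDerivAt (fun x => ∫ y in a x..b x, V (x, y))
      ((∫ y in a x₀..b x₀, partialFst V (x₀, y)) + b' • V (x₀, b x₀) - a' • V (x₀, a x₀)) x₀ := by
  have hfixed := hasDerivAt_integral_of_contDiffOn hU hV hseg
  have hlow : U ∈ 𝓝 (x₀, a x₀) := hU.mem_nhds (hseg _ left_mem_uIcc)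
  have hhigh : U ∈ 𝓝 (x₀, b x₀) := hU.mem_nhds (hseg _ right_mem_uIcc)
  have hupper := hasDerivAt_integral_upper_limit_of_continuousOn hV.continuousOn hhigh hb
  have hlower := hasDerivAt_integral_upper_limit_of_continuousOn hV.continuousOn hlow ha
  refine ((hfixed.add hupper).sub hlower).congr_of_eventuallyEq ?_
  filter_upwards [eventually_forall_uIcc_mem hU hseg,
    eventually_forall_uIcc_mem_of_continuousAt hlow ha.continuousAt,
    eventually_forall_uIcc_mem_of_continuousAt hhigh hb.continuousAt] with x hmid hlo hhi
  have hint : ∀ {c d : ℝ}, (∀ y ∈ [[c, d]], (x, y) ∈ U) →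
      IntervalIntegrable (fun y => V (x, y)) volume c d := fun h =>
    (hV.continuousOn.comp (by fun_prop) h).intervalIntegrable
  have hsplit := integral_interval_sub_interval_comm'
    (((hint hlo).symm.trans (hint hmid)).trans (hint hhi)) (hint hmid) (hint hlo).symm
  rw [sub_eq_iff_eq_add] at hsplit
  simp only [Pi.add_apply, Pi.sub_apply, hsplit]
  abel

end Leibniz

section Harmonic

variable [CompleteSpace E] {F : ℝ × ℝ → E} {U : Set (ℝ × ℝ)} {x₀ : ℝ}

theorem integral_partialFst_partialFst_of_laplacian_eq_zero (hU : IsOpen U)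
    (hF : ContDiffOn ℝ 2 F U) {a b : ℝ} (hab : a ≤ b) (hseg : ∀ y ∈ Icc a b, (x₀, y) ∈ U)
    (hharm : ∀ y ∈ Ioo a b,
      partialFst (partialFst F) (x₀, y) + partialSnd (partialSnd F) (x₀, y) = 0) :
    ∫ y in a..b, partialFst (partialFst F) (x₀, y) =
      partialSnd F (x₀, a) - partialSnd F (x₀, b) := by
  have hFy : ContDiffOn ℝ 1 (partialSnd F) U := hF.contDiffOn_partialSnd hU
  have hFxx : ContinuousOn (partialFst (partialFst F)) U :=
    ((hF.contDiffOn_partialFst (n := 1) hU).contDiffOn_partialFst (n := 0) hU).continuousOn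
  rw [integral_eq_sub_of_hasDerivAt_of_le hab (f := fun y => -partialSnd F (x₀, y))
    (f' := fun y => partialFst (partialFst F) (x₀, y))
    (hFy.continuousOn.comp (by fun_prop) hseg).neg ?_
    ((hFxx.comp (by fun_prop) (uIcc_of_le hab ▸ hseg)).intervalIntegrable)]
  · abel
  · intro y hy
    rw [eq_neg_of_add_eq_zero_left (hharm y hy)]
    exact (hFy.hasDerivAt_partialSnd (p := (x₀, y)) hU one_ne_zero
      (hseg y (Ioo_subset_Icc_self hy))).neg

theorem hasDerivAt_integral_partialFst_of_laplacian_eq_zero (hU : IsOpen U)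
    (hF : ContDiffOn ℝ 2 F U) {a b : ℝ → ℝ} (ha : DifferentiableAt ℝ a x₀)
    (hb : DifferentiableAt ℝ b x₀) (hab : a x₀ ≤ b x₀)
    (hseg : ∀ y ∈ Icc (a x₀) (b x₀), (x₀, y) ∈ U)
    (hharm : ∀ y ∈ Ioo (a x₀) (b x₀),
      partialFst (partialFst F) (x₀, y) + partialSnd (partialSnd F) (x₀, y) = 0) :
    HasDerivAt (fun x => ∫ y in a x..b x, partialFst F (x, y))
      (graphFlux F a x₀ - graphFlux F b x₀) x₀ := by
  have hleibniz := hasDerivAt_integral_variable_limits_of_contDiffOn hU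
    (hF.contDiffOn_partialFst (n := 1) hU) ha.hasDerivAt hb.hasDerivAt (uIcc_of_le hab ▸ hseg)
  rw [integral_partialFst_partialFst_of_laplacian_eq_zero hU hF hab hseg hharm] at hleibniz
  refine hleibniz.congr_deriv ?_
  simp only [graphFlux]
  abel

end Harmonic

theorem mk_mem_closure_between_graphs {f h : ℝ → ℝ} {x y : ℝ} (hfh : f x < h x)
    (hy : y ∈ Icc (f x) (h x)) : (x, y) ∈ closure {p : ℝ × ℝ | f p.1 < p.2 ∧ p.2 < h p.1} := by
  have hvert : {x} ×ˢ Ioo (f x) (h x) ⊆ {p : ℝ × ℝ | f p.1 < p.2 ∧ p.2 < h p.1} := by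
    rintro ⟨x', y'⟩ ⟨hx', hy'⟩
    rw [mem_singleton_iff] at hx'
    subst hx'
    exact hy'
  refine closure_mono hvert ?_
  rw [closure_prod_eq, closure_singleton, closure_Ioo hfh.ne]
  exact ⟨rfl, hy⟩

/-- Flux identity (Lemma 4.1): for a harmonic function `u` on the periodic domain
between the graphs of `f` and `h`, the flux of `∇u` through the upper graph equals
the flux through the lower graph. -/
theorem stmt_19 (f h : ℝ → ℝ)
    (hf : ContDiff ℝ 1 f) (hh : ContDiff ℝ 1 h)
    (hfper : ∀ x : ℝ, f (x + 2 * Real.pi) = f x)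
    (hhper : ∀ x : ℝ, h (x + 2 * Real.pi) = h x)
    (hfh : ∀ x : ℝ, f x < h x)
    (Ω : Set (ℝ × ℝ)) (hΩ : Ω = {p : ℝ × ℝ | f p.1 < p.2 ∧ p.2 < h p.1})
    (u : ℝ → ℝ → ℝ) (U : Set (ℝ × ℝ)) (hU : IsOpen U) (hUΩ : closure Ω ⊆ U)
    (hu : ContDiffOn ℝ 2 (fun p : ℝ × ℝ => u p.1 p.2) U)
    (huper : ∀ x y : ℝ, u (x + 2 * Real.pi) y = u x y)
    (hharm : ∀ p ∈ Ω,
      deriv (fun x' => deriv (fun x'' => u x'' p.2) x') p.1 +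
        deriv (fun y' => deriv (fun y'' => u p.1 y'') y') p.2 = 0) :
    ∫ x in (0 : ℝ)..(2 * Real.pi),
        (deriv (fun y => u x y) (h x) - deriv h x * deriv (fun x' => u x' (h x)) x) =
      ∫ x in (0 : ℝ)..(2 * Real.pi),
        (deriv (fun y => u x y) (f x) - deriv f x * deriv (fun x' => u x' (f x)) x) := by
  set P : ℝ × ℝ → ℝ := fun p => u p.1 p.2
  have hslab : ∀ x, ∀ y ∈ Icc (f x) (h x), (x, y) ∈ U := fun x y hy =>
    hUΩ (hΩ ▸ mk_mem_closure_between_graphs (hfh x) hy)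
  have hderiv : ∀ x, HasDerivAt (fun x => ∫ y in f x..h x, partialFst P (x, y))
      (graphFlux P f x - graphFlux P h x) x := fun x =>
    hasDerivAt_integral_partialFst_of_laplacian_eq_zero hU hu (hf.differentiable one_ne_zero x)
      (hh.differentiable one_ne_zero x) (hfh x).le (hslab x) fun y hy => hharm (x, y) (hΩ ▸ hy)
  have hperiod : (∫ y in f (2 * Real.pi)..h (2 * Real.pi), partialFst P (2 * Real.pi, y)) =
      ∫ y in f 0..h 0, partialFst P (0, y) := by
    rw [← zero_add (2 * Real.pi), hfper, hhper]
    exact integral_congr fun y _ => partialFst_add_period (F := P) (fun x y => huper x y) 0 y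
  have hfluxf := (hu.continuous_graphFlux hU hf fun x => hslab x (f x) ⟨le_rfl, (hfh x).le⟩)
    |>.intervalIntegrable (μ := volume) 0 (2 * Real.pi)
  have hfluxh := (hu.continuous_graphFlux hU hh fun x => hslab x (h x) ⟨(hfh x).le, le_rfl⟩)
    |>.intervalIntegrable (μ := volume) 0 (2 * Real.pi)
  have hFTC := integral_eq_sub_of_hasDerivAt (fun x _ => hderiv x) (hfluxf.sub hfluxh)
  rw [hperiod, sub_self, integral_sub hfluxf hfluxh, sub_eq_zero] at hFTC
  exact hFTC.symm
end
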